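/- Let n ≥ 8 be an integer and let k be an integer with 2 ≤ k ≤ ⌊n/2⌋ − 1. Then the coefficient of the monomial T_n·T_{n+1−k}·T_{k+1} in R_{n+1} equals −2(n+1)·C(n,k); that is, c_{(n, n+1−k, k+1)}^{(n+1)} = −2(n+1)·C(n,k), where C(·,·) denotes the binomial coefficient. -/

import Mathlib

open MvPolynomial

noncomputable section

/-- Linear extension to polynomials of a map defined on exponent vectors (monomials). -/
def extendMon (f : (ℕ →₀ ℕ) → MvPolynomial ℕ ℝ) (P : MvPolynomial ℕ ℝ) :
    MvPolynomial ℕ ℝ :=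
  ∑ d ∈ P.support, P.coeff d • f d

/-- Action of `D₁` on the monomial with exponent vector `d`. -/
def D1mon (d : ℕ →₀ ℕ) : MvPolynomial ℕ ℝ :=
  ∑ i ∈ d.support,
    (d i : ℝ) • monomial (d - Finsupp.single i 1 + Finsupp.single (i + 1) 1) (1 : ℝ)

/-- Action of `D₂` on the monomial with exponent vector `d`. -/
def D2mon (d : ℕ →₀ ℕ) : MvPolynomial ℕ ℝ :=
  ∑ i ∈ d.support,
    (d i : ℝ) • monomial (d - Finsupp.single i 1 + Finsupp.single (i + 2) 1) (1 : ℝ)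

def D1op : MvPolynomial ℕ ℝ → MvPolynomial ℕ ℝ := extendMon D1mon

def D2op : MvPolynomial ℕ ℝ → MvPolynomial ℕ ℝ := extendMon D2mon

/-- The operator `L = (D₁ ∘ D₁ - D₂)/2`. -/
def Lop (P : MvPolynomial ℕ ℝ) : MvPolynomial ℕ ℝ :=
  (1 / 2 : ℝ) • (D1op (D1op P) - D2op P)

/-- Action of `H` on the monomial with exponent vector `d`. -/
def Hmon (d : ℕ →₀ ℕ) : MvPolynomial ℕ ℝ :=
  (-(1 / 2) : ℝ) • ∑ i ∈ d.support, ∑ l ∈ Finset.Ico 1 i,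
    ((d i : ℝ) * (i.choose l : ℝ)) •
      monomial (d - Finsupp.single i 1 + Finsupp.single (1 + l) 1
        + Finsupp.single (1 + i - l) 1) (1 : ℝ)

def Hop : MvPolynomial ℕ ℝ → MvPolynomial ℕ ℝ := extendMon Hmon

/-- `A_n = -∑_{k=1}^{n-1} C(n,k) T_{1+k} T_{1+n-k} T_n`. -/
def Apoly (n : ℕ) : MvPolynomial ℕ ℝ :=
  - ∑ k ∈ Finset.Ico 1 n, (n.choose k : ℝ) • (X (1 + k) * X (1 + n - k) * X n)

/-- The polynomials `R_n`: `R_2 = 0` and `R_{n+1} = A_n + L(R_n) + H(R_n)` for `n ≥ 2`. -/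
def Rpoly : ℕ → MvPolynomial ℕ ℝ
  | 0 => 0
  | 1 => 0
  | 2 => 0
  | (n + 3) => Apoly (n + 2) + Lop (Rpoly (n + 2)) + Hop (Rpoly (n + 2))

local notation "e[" i "]" => (Finsupp.single i 1 : ℕ →₀ ℕ)
local notation "mono" d => (monomial d (1:ℝ))

lemma extendMon_monomial (f : (ℕ →₀ ℕ) → MvPolynomial ℕ ℝ) (d : ℕ →₀ ℕ) (c : ℝ) :
    extendMon f (monomial d c) = c • f d := by
  show Finsupp.linearCombination ℝ f (Finsupp.single d c) = c • f d
  simp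

lemma extendMon_sum (f : (ℕ →₀ ℕ) → MvPolynomial ℕ ℝ) {ι : Type*} (s : Finset ι)
    (g : ι → MvPolynomial ℕ ℝ) :
    extendMon f (∑ i ∈ s, g i) = ∑ i ∈ s, extendMon f (g i) :=
  by
    have key : ∀ P, extendMon f P = ((Finsupp.linearCombination ℝ f).comp
        (AddMonoidAlgebra.coeffLinearEquiv ℝ).toLinearMap) P := fun P => rfl
    simp only [key]; exact map_sum _ g s

lemma extendMon_smul (f : (ℕ →₀ ℕ) → MvPolynomial ℕ ℝ) (c : ℝ) (P) :
    extendMon f (c • P) = c • extendMon f P :=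
  by
    have key : ∀ P, extendMon f P = ((Finsupp.linearCombination ℝ f).comp
        (AddMonoidAlgebra.coeffLinearEquiv ℝ).toLinearMap) P := fun P => rfl
    simp only [key]; exact map_smul _ c P

lemma extendMon_zero (f : (ℕ →₀ ℕ) → MvPolynomial ℕ ℝ) : extendMon f 0 = 0 :=
  map_zero (Finsupp.linearCombination ℝ f)

lemma swap_exp (d : ℕ →₀ ℕ) (i j : ℕ) (hi : 1 ≤ d i) (hj : (if i = j then 2 else 1) ≤ d j) :
    d - e[i] + e[i+1] - e[j] + e[j+1] = d - e[i] - e[j] + e[i+1] + e[j+1] := by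
  ext a
  simp only [Finsupp.tsub_apply, Finsupp.add_apply, Finsupp.single_apply]
  rcases eq_or_ne i a with h1 | h1 <;> rcases eq_or_ne j a with h2 | h2 <;>
    (try subst h1) <;> (try subst h2) <;> split_ifs at hj ⊢ <;> omega

lemma cancel_mid (d : ℕ →₀ ℕ) (i j : ℕ) (hj : 1 ≤ d j) (hij : i ≠ j) :
    d - e[i] - e[j] + e[j] = d - e[i] := by
  ext a
  simp only [Finsupp.tsub_apply, Finsupp.add_apply, Finsupp.single_apply]
  rcases eq_or_ne i a with h1 | h1 <;> rcases eq_or_ne j a with h2 | h2 <;>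
    (try subst h1) <;> (try subst h2) <;> split_ifs <;> omega

lemma D1mon_superset (d : ℕ →₀ ℕ) (T : Finset ℕ) (hT : d.support ⊆ T) :
    D1mon d = ∑ i ∈ T, (d i : ℝ) • monomial (d - e[i] + e[i+1]) (1:ℝ) :=
  Finset.sum_subset hT (fun i _ hi => by
    simp [Finsupp.notMem_support_iff.mp hi])

lemma D2mon_superset (d : ℕ →₀ ℕ) (T : Finset ℕ) (hT : d.support ⊆ T) :
    D2mon d = ∑ i ∈ T, (d i : ℝ) • monomial (d - e[i] + e[i+2]) (1:ℝ) :=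
  Finset.sum_subset hT (fun i _ hi => by
    simp [Finsupp.notMem_support_iff.mp hi])

lemma key_step (d : ℕ →₀ ℕ) (i : ℕ) (hi : d i ≠ 0) :
    D1mon (d - e[i] + e[i+1]) =
      monomial (d - e[i] + e[i+2]) (1:ℝ)
      + ∑ j ∈ d.support, ((d j : ℝ) - if i = j then 1 else 0) •
          monomial (d - e[i] - e[j] + e[i+1] + e[j+1]) (1:ℝ) := by
  have hi1 : 1 ≤ d i := Nat.one_le_iff_ne_zero.mpr hi
  set d' := d - e[i] + e[i+1] with hd'
  have hsupp : d'.support ⊆ insert (i+1) d.support := by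
    intro a ha
    simp only [Finset.mem_insert, Finsupp.mem_support_iff] at ha ⊢
    by_contra h
    push_neg at h
    obtain ⟨h1, h2⟩ := h
    apply ha
    simp only [hd', Finsupp.add_apply, Finsupp.tsub_apply, Finsupp.single_apply, h2]
    split_ifs <;> omega
  rw [D1mon_superset d' _ hsupp]
  have step1 : ∀ j ∈ insert (i+1) d.support,
      (d' j : ℝ) • monomial (d' - e[j] + e[j+1]) (1:ℝ)
      = ((d j : ℝ) - if i = j then 1 else 0) •
          monomial (d - e[i] - e[j] + e[i+1] + e[j+1]) (1:ℝ)
        + (if i+1 = j then (1:ℝ) else 0) • monomial (d - e[i] + e[i+2]) (1:ℝ) := by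
    intro j _
    have hd'j : d' j = d j - (if i = j then 1 else 0) + (if i+1 = j then 1 else 0) := by
      simp only [hd', Finsupp.add_apply, Finsupp.tsub_apply, Finsupp.single_apply]
    have hcast : (d' j : ℝ) = ((d j : ℝ) - if i = j then 1 else 0)
        + (if i+1 = j then (1:ℝ) else 0) := by
      rw [hd'j]
      split_ifs with h1 h2 h2
      · omega
      · subst h1; rw [Nat.cast_add, Nat.cast_sub hi1]; push_cast; ring
      · rw [Nat.sub_zero]; push_cast; ring
      · rw [Nat.sub_zero]; push_cast; ring
    rw [hcast, add_smul]
    congr 1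
    · rcases eq_or_ne ((d j : ℝ) - if i = j then 1 else 0) 0 with hc | hc
      · rw [hc, zero_smul, zero_smul]
      · have hj' : (if i = j then 2 else 1) ≤ d j := by
          split_ifs at hc ⊢ with h
          · have h1 : d j ≠ 1 := by
              intro hh
              simp [hh] at hc
            have h2 : 1 ≤ d j := h ▸ hi1
            omega
          · have : d j ≠ 0 := by
              intro hh
              simp [hh] at hc
            omega
        rw [hd', swap_exp d i j hi1 hj']
    · rcases eq_or_ne (i+1) j with h | h
      · subst h
        rw [if_pos rfl, one_smul, one_smul]
        congr 1
        rw [hd', add_tsub_cancel_right]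
      · rw [if_neg h, zero_smul, zero_smul]
  rw [Finset.sum_congr rfl step1, Finset.sum_add_distrib, add_comm]
  congr 1
  · simp only [ite_smul, one_smul, zero_smul]
    rw [Finset.sum_ite_eq]
    rw [if_pos (Finset.mem_insert_self _ _)]
  · refine (Finset.sum_subset (Finset.subset_insert _ _) ?_).symm
    intro j _ hjs
    have hdj : d j = 0 := Finsupp.notMem_support_iff.mp hjs
    have hij : i ≠ j := by
      intro hh
      exact hjs (hh ▸ Finsupp.mem_support_iff.mpr hi)
    rw [if_neg hij, hdj]
    simp

lemma D1op_monomial (d : ℕ →₀ ℕ) : D1op (monomial d (1:ℝ)) = D1mon d := by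
  rw [D1op, extendMon_monomial, one_smul]

lemma Lop_monomial_core (d : ℕ →₀ ℕ) :
    Lop (monomial d (1:ℝ)) = (1/2 : ℝ) • ∑ i ∈ d.support, ∑ j ∈ d.support,
      ((d i : ℝ) * ((d j : ℝ) - if i = j then 1 else 0)) •
        monomial (d - e[i] - e[j] + e[i+1] + e[j+1]) (1:ℝ) := by
  rw [Lop, D1op_monomial]
  have h2 : D2op (monomial d (1:ℝ)) = D2mon d := by
    rw [D2op, extendMon_monomial, one_smul]
  have h1 : D1op (D1mon d) = D2mon d + ∑ i ∈ d.support, ∑ j ∈ d.support,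
      ((d i : ℝ) * ((d j : ℝ) - if i = j then 1 else 0)) •
        monomial (d - e[i] - e[j] + e[i+1] + e[j+1]) (1:ℝ) := by
    rw [D1mon]
    rw [show D1op = extendMon D1mon from rfl, extendMon_sum]
    have : ∀ i ∈ d.support,
        extendMon D1mon ((d i : ℝ) • monomial (d - e[i] + e[i+1]) (1:ℝ))
        = (d i : ℝ) • monomial (d - e[i] + e[i+2]) (1:ℝ)
          + ∑ j ∈ d.support, ((d i : ℝ) * ((d j : ℝ) - if i = j then 1 else 0)) •
              monomial (d - e[i] - e[j] + e[i+1] + e[j+1]) (1:ℝ) := by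
      intro i hi
      rw [extendMon_smul, extendMon_monomial, one_smul,
        key_step d i (Finsupp.mem_support_iff.mp hi), smul_add, Finset.smul_sum]
      congr 1
      refine Finset.sum_congr rfl fun j _ => ?_
      rw [smul_smul]
    rw [Finset.sum_congr rfl this, Finset.sum_add_distrib]
    congr 1
  rw [h1, h2, add_sub_cancel_left]

lemma Lop_monomial (d : ℕ →₀ ℕ) (T : Finset ℕ) (hT : d.support ⊆ T) :
    Lop (monomial d (1:ℝ)) = (1/2 : ℝ) • ∑ i ∈ T, ∑ j ∈ T,
      ((d i : ℝ) * ((d j : ℝ) - if i = j then 1 else 0)) •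
        monomial (d - e[i] - e[j] + e[i+1] + e[j+1]) (1:ℝ) := by
  rw [Lop_monomial_core]
  congr 1
  have inner : ∀ i : ℕ, ∑ j ∈ d.support,
      ((d i : ℝ) * ((d j : ℝ) - if i = j then 1 else 0)) •
        monomial (d - e[i] - e[j] + e[i+1] + e[j+1]) (1:ℝ)
      = ∑ j ∈ T, ((d i : ℝ) * ((d j : ℝ) - if i = j then 1 else 0)) •
        monomial (d - e[i] - e[j] + e[i+1] + e[j+1]) (1:ℝ) := by
    intro i
    refine Finset.sum_subset hT fun j _ hj => ?_
    have hdj : d j = 0 := Finsupp.notMem_support_iff.mp hj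
    rcases eq_or_ne i j with rfl | hne
    · simp [hdj]
    · simp [hdj, hne]
  rw [Finset.sum_congr rfl fun i _ => inner i]
  refine Finset.sum_subset hT fun i _ hi => ?_
  have hdi : d i = 0 := Finsupp.notMem_support_iff.mp hi
  simp [hdi]

lemma Lop_apply_sum (P : MvPolynomial ℕ ℝ) :
    Lop P = ∑ d ∈ P.support, coeff d P • Lop (monomial d (1:ℝ)) := by
  have hrep : P = ∑ d ∈ P.support, coeff d P • monomial d (1:ℝ) := by
    conv_lhs => rw [← support_sum_monomial_coeff P]
    refine Finset.sum_congr rfl fun d _ => ?_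
    rw [smul_monomial, smul_eq_mul, mul_one]
  rw [Lop]
  conv_lhs => rw [hrep]
  rw [show D1op = extendMon D1mon from rfl, show D2op = extendMon D2mon from rfl]
  rw [extendMon_sum, extendMon_sum]
  simp only [extendMon_smul]
  rw [extendMon_sum]
  simp only [extendMon_smul]
  rw [← Finset.sum_sub_distrib, Finset.smul_sum]
  refine Finset.sum_congr rfl fun d _ => ?_
  rw [Lop]
  rw [show D1op = extendMon D1mon from rfl, show D2op = extendMon D2mon from rfl]
  simp only [smul_sub, smul_smul]
  ring_nf

lemma Hop_apply_sum (P : MvPolynomial ℕ ℝ) :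
    Hop P = ∑ d ∈ P.support, coeff d P • Hmon d := rfl

lemma coeff_Lop_pairs (P : MvPolynomial ℕ ℝ) (m : ℕ →₀ ℕ) (M : ℕ)
    (hsupp : ∀ d ∈ P.support, ∀ x, d x ≠ 0 → x < M) :
    coeff m (Lop P) = (1/2 : ℝ) *
      ∑ p ∈ Finset.range M ×ˢ Finset.range M, ∑ d ∈ P.support, coeff d P *
        (((d p.1 : ℝ) * ((d p.2 : ℝ) - if p.1 = p.2 then 1 else 0)) *
          (if d - e[p.1] - e[p.2] + e[p.1+1] + e[p.2+1] = m then 1 else 0)) := by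
  rw [Lop_apply_sum, coeff_sum]
  have per_d : ∀ d ∈ P.support, coeff m (coeff d P • Lop (monomial d (1:ℝ)))
      = ∑ p ∈ Finset.range M ×ˢ Finset.range M, (1/2 : ℝ) * (coeff d P *
        (((d p.1 : ℝ) * ((d p.2 : ℝ) - if p.1 = p.2 then 1 else 0)) *
          (if d - e[p.1] - e[p.2] + e[p.1+1] + e[p.2+1] = m then 1 else 0))) := by
    intro d hd
    rw [coeff_smul, Lop_monomial d (Finset.range M) (fun x hx => Finset.mem_range.mpr
      (hsupp d hd x (Finsupp.mem_support_iff.mp hx))), coeff_smul]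
    simp only [coeff_sum, coeff_smul, coeff_monomial, smul_eq_mul]
    rw [← Finset.sum_product']
    rw [Finset.mul_sum, Finset.mul_sum]
    refine Finset.sum_congr rfl fun p _ => ?_
    ring
  rw [Finset.sum_congr rfl per_d, Finset.sum_comm, Finset.mul_sum]
  refine Finset.sum_congr rfl fun p _ => ?_
  rw [Finset.mul_sum]

lemma support_sum_sub {ι : Type*} (s : Finset ι) (f : ι → MvPolynomial ℕ ℝ) :
    (∑ i ∈ s, f i).support ⊆ s.biUnion fun i => (f i).support := by
  intro d hd
  rw [mem_support_iff] at hd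
  by_contra hmem
  apply hd
  rw [coeff_sum]
  refine Finset.sum_eq_zero fun i hi => ?_
  have h2 : d ∉ (f i).support := fun hc => hmem (Finset.mem_biUnion.mpr ⟨i, hi, hc⟩)
  exact notMem_support_iff.mp h2

/-- All parts (elements of the support of each exponent vector) lie in `[lo, hi]`. -/
def PartsIn (P : MvPolynomial ℕ ℝ) (lo hi : ℕ) : Prop :=
  ∀ d ∈ P.support, ∀ x, d x ≠ 0 → lo ≤ x ∧ x ≤ hi

lemma coeff_Hop_zero (P : MvPolynomial ℕ ℝ) (B c : ℕ) (m : ℕ →₀ ℕ)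
    (hP : ∀ d ∈ P.support, ∀ x, d x ≠ 0 → x ≤ B) (hc : B < c) (hm : m c ≠ 0) :
    coeff m (Hop P) = 0 := by
  rw [Hop_apply_sum, coeff_sum]
  refine Finset.sum_eq_zero fun d hd => ?_
  rw [coeff_smul]
  have hzero : coeff m (Hmon d) = 0 := by
    rw [Hmon, coeff_smul]
    simp only [coeff_sum, coeff_smul, coeff_monomial, smul_eq_mul]
    rw [show (∑ i ∈ d.support, ∑ l ∈ Finset.Ico 1 i, ((d i : ℝ) * (i.choose l : ℝ)) *
        (if d - e[i] + e[1+l] + e[1+i-l] = m then 1 else 0)) = 0 from ?_, mul_zero]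
    refine Finset.sum_eq_zero fun i hi => Finset.sum_eq_zero fun l hl => ?_
    rw [if_neg, mul_zero]
    intro hEq
    have hiB : i ≤ B := hP d hd i (Finsupp.mem_support_iff.mp hi)
    have hl' : 1 ≤ l ∧ l < i := by simpa using Finset.mem_Ico.mp hl
    have hdc : d c = 0 := by
      by_contra h
      exact absurd (hP d hd c h) (by omega)
    have := DFunLike.congr_fun hEq c
    simp only [Finsupp.add_apply, Finsupp.tsub_apply, Finsupp.single_apply] at this
    split_ifs at this <;> omega
  rw [hzero, smul_eq_mul, mul_zero]

lemma partsIn_mono {P : MvPolynomial ℕ ℝ} {lo hi lo' hi' : ℕ} (h : PartsIn P lo hi)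
    (h1 : lo' ≤ lo) (h2 : hi ≤ hi') : PartsIn P lo' hi' := by
  intro d hd x hx
  have := h d hd x hx
  omega

lemma partsIn_add {P Q : MvPolynomial ℕ ℝ} {lo hi : ℕ} (hP : PartsIn P lo hi)
    (hQ : PartsIn Q lo hi) : PartsIn (P + Q) lo hi := by
  intro d hd x hx
  rcases Finset.mem_union.mp (MvPolynomial.support_add hd) with h | h
  exacts [hP d h x hx, hQ d h x hx]

lemma partsIn_zero (lo hi : ℕ) : PartsIn 0 lo hi := by
  intro d hd
  simp at hd

lemma parts_single_sum (a b c x : ℕ) (hx : (e[a] + e[b] + e[c]) x ≠ 0) :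
    x = a ∨ x = b ∨ x = c := by
  simp only [Finsupp.add_apply, Finsupp.single_apply] at hx
  split_ifs at hx <;> omega

lemma XXX_eq (a b c : ℕ) : (X a * X b * X c : MvPolynomial ℕ ℝ)
    = monomial (e[a] + e[b] + e[c]) 1 := by
  rw [X, X, X, monomial_mul, monomial_mul, mul_one, mul_one]

lemma partsIn_Apoly (M : ℕ) (h2 : 2 ≤ M) : PartsIn (Apoly M) 2 M := by
  intro d hd x hx
  rw [Apoly, support_neg] at hd
  have := support_sum_sub _ _ hd
  rw [Finset.mem_biUnion] at this
  obtain ⟨j, hj, hdj⟩ := this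
  have hj' : 1 ≤ j ∧ j < M := by simpa using Finset.mem_Ico.mp hj
  have := MvPolynomial.support_smul hdj
  rw [XXX_eq] at this
  have hsub := MvPolynomial.support_monomial_subset this
  rw [Finset.mem_singleton] at hsub
  subst hsub
  rcases parts_single_sum _ _ _ x hx with rfl | rfl | rfl <;> omega

lemma partsIn_Lop {P : MvPolynomial ℕ ℝ} {lo hi : ℕ} (h : PartsIn P lo hi) :
    PartsIn (Lop P) lo (hi + 1) := by
  intro d hd x hx
  rw [Lop_apply_sum] at hd
  obtain ⟨d', hd', hmem⟩ := Finset.mem_biUnion.mp (support_sum_sub _ _ hd)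
  have hmem2 := MvPolynomial.support_smul hmem
  rw [Lop_monomial d' d'.support le_rfl] at hmem2
  have hmem3 := MvPolynomial.support_smul hmem2
  obtain ⟨i, hi, hmem4⟩ := Finset.mem_biUnion.mp (support_sum_sub _ _ hmem3)
  obtain ⟨j, hj, hmem5⟩ := Finset.mem_biUnion.mp (support_sum_sub _ _ hmem4)
  have hmem5' := MvPolynomial.support_smul hmem5
  have hmem6 := MvPolynomial.support_monomial_subset hmem5' 
  rw [Finset.mem_singleton] at hmem6
  subst hmem6
  have hxval := hx
  simp only [Finsupp.add_apply, Finsupp.tsub_apply, Finsupp.single_apply] at hxval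
  have hibd := h d' hd' i (Finsupp.mem_support_iff.mp hi)
  have hjbd := h d' hd' j (Finsupp.mem_support_iff.mp hj)
  by_cases hdx : d' x ≠ 0
  · have := h d' hd' x hdx
    omega
  · push_neg at hdx
    rw [hdx] at hxval
    split_ifs at hxval <;> omega

lemma partsIn_Hop {P : MvPolynomial ℕ ℝ} {lo hi : ℕ} (h : PartsIn P lo hi) (hlo : 2 ≤ lo) :
    PartsIn (Hop P) 2 hi := by
  intro d hd x hx
  rw [Hop_apply_sum] at hd
  obtain ⟨d', hd', hmem⟩ := Finset.mem_biUnion.mp (support_sum_sub _ _ hd)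
  have hmem2 := MvPolynomial.support_smul hmem
  rw [Hmon] at hmem2
  have hmem3 := MvPolynomial.support_smul hmem2
  obtain ⟨i, hi, hmem4⟩ := Finset.mem_biUnion.mp (support_sum_sub _ _ hmem3)
  obtain ⟨l, hl, hmem5⟩ := Finset.mem_biUnion.mp (support_sum_sub _ _ hmem4)
  have hmem6 := MvPolynomial.support_smul hmem5
  have hmem7 := MvPolynomial.support_monomial_subset hmem6
  rw [Finset.mem_singleton] at hmem7
  subst hmem7
  have hl' : 1 ≤ l ∧ l < i := by simpa using Finset.mem_Ico.mp hl
  have hxval := hx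
  simp only [Finsupp.add_apply, Finsupp.tsub_apply, Finsupp.single_apply] at hxval
  have hibd := h d' hd' i (Finsupp.mem_support_iff.mp hi)
  by_cases hdx : d' x ≠ 0
  · have := h d' hd' x hdx
    omega
  · push_neg at hdx
    rw [hdx] at hxval
    split_ifs at hxval <;> omega

lemma Rpoly_succ (M : ℕ) (h : 2 ≤ M) :
    Rpoly (M + 1) = Apoly M + Lop (Rpoly M) + Hop (Rpoly M) := by
  match M, h with
  | (n+2), _ => rfl

lemma Rpoly_partsIn : ∀ M, PartsIn (Rpoly M) 2 (M - 1) := by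
  intro M
  induction M using Nat.strong_induction_on with
  | _ M ih =>
    match M with
    | 0 => exact partsIn_zero _ _
    | 1 => exact partsIn_zero _ _
    | 2 => exact partsIn_zero _ _
    | (M+3) =>
      rw [show M+3 = (M+2)+1 from rfl, Rpoly_succ (M+2) (by omega)]
      have hR := ih (M+2) (by omega)
      refine partsIn_add (partsIn_add ?_ ?_) ?_
      · exact partsIn_mono (partsIn_Apoly (M+2) (by omega)) le_rfl (by omega)
      · exact partsIn_mono (partsIn_Lop hR) le_rfl (by omega)
      · exact partsIn_mono (partsIn_Hop hR le_rfl) le_rfl (by omega)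

lemma untrunc_coord (d : ℕ →₀ ℕ) (i j : ℕ) (m : ℕ →₀ ℕ)
    (hi : 1 ≤ d i) (hj : (if i = j then 2 else 1) ≤ d j)
    (hind : d - e[i] - e[j] + e[i+1] + e[j+1] = m) :
    ∀ a, d a + (if i+1 = a then 1 else 0) + (if j+1 = a then 1 else 0)
       = m a + (if i = a then 1 else 0) + (if j = a then 1 else 0) := by
  intro a
  have h := DFunLike.congr_fun hind a
  simp only [Finsupp.add_apply, Finsupp.tsub_apply, Finsupp.single_apply] at h
  rcases eq_or_ne i a with h1|h1 <;> rcases eq_or_ne j a with h2|h2 <;>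
    (try subst h1) <;> (try subst h2) <;> split_ifs at h hj ⊢ <;> omega

section MainSolve
variable (M k : ℕ)

/-- target coordinate form for the main monomial -/
def mco (a : ℕ) : ℕ :=
  (if M = a then 1 else 0) + (if M+1-k = a then 1 else 0) + (if k+1 = a then 1 else 0)

lemma solve_main_i (hk2 : 2 ≤ k) (hkM : 2*k+1 ≤ M) (d : ℕ →₀ ℕ)
    (hd : ∀ x, d x ≠ 0 → 2 ≤ x ∧ x ≤ M-1) (j : ℕ) (hi : d (M-1) ≠ 0) (hj : d j ≠ 0)
    (hjne : j ≠ M-1)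
    (hcoord : ∀ a, d a + (if (M-1)+1 = a then 1 else 0) + (if j+1 = a then 1 else 0)
      = mco M k a + (if M-1 = a then 1 else 0) + (if j = a then 1 else 0)) :
    (j = M-k ∧ d = e[M-1] + e[M-k] + e[k+1]) ∨ (j = k ∧ d = e[M-1] + e[M+1-k] + e[k]) := by
  have hjb := hd j hj
  have hib := hd (M-1) hi
  have hdj1 := hcoord (j+1)
  rw [mco] at hdj1
  have hj2 : j+1 = M+1-k ∨ j+1 = k+1 := by
    have hdj2 : j+1 = M+1-k ∨ j+1 = k+1 ∨ j+1 = M-1 := by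
      split_ifs at hdj1 <;> omega
    rcases hdj2 with h|h|h
    · exact Or.inl h
    · exact Or.inr h
    · -- j = M-2 case: forces k = 2
      have h2 := hcoord (M-1)
      rw [mco] at h2
      left
      split_ifs at h2 <;> omega
  rcases hj2 with h|h
  · left
    have hjv : j = M-k := by omega
    subst hjv
    refine ⟨rfl, ?_⟩
    ext a
    have h3 := hcoord a
    rw [mco] at h3
    simp only [Finsupp.add_apply, Finsupp.single_apply]
    split_ifs at h3 ⊢ <;> omega
  · right
    have hjv : j = k := by omega
    subst hjv
    refine ⟨rfl, ?_⟩
    ext a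
    have h3 := hcoord a
    rw [mco] at h3
    simp only [Finsupp.add_apply, Finsupp.single_apply]
    split_ifs at h3 ⊢ <;> omega

lemma solve_main (hk2 : 2 ≤ k) (hkM : 2*k+1 ≤ M) (d : ℕ →₀ ℕ)
    (hd : ∀ x, d x ≠ 0 → 2 ≤ x ∧ x ≤ M-1) (i j : ℕ) (hi : d i ≠ 0) (hj : d j ≠ 0)
    (hcoord : ∀ a, d a + (if i+1 = a then 1 else 0) + (if j+1 = a then 1 else 0)
      = mco M k a + (if i = a then 1 else 0) + (if j = a then 1 else 0)) :
    (i = M-1 ∧ j = M-k ∧ d = e[M-1] + e[M-k] + e[k+1])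
    ∨ (j = M-1 ∧ i = M-k ∧ d = e[M-1] + e[M-k] + e[k+1])
    ∨ (i = M-1 ∧ j = k ∧ d = e[M-1] + e[M+1-k] + e[k])
    ∨ (j = M-1 ∧ i = k ∧ d = e[M-1] + e[M+1-k] + e[k]) := by
  have hib := hd i hi
  have hjb := hd j hj
  have hM : d M = 0 := by
    by_contra h
    have := hd M h
    omega
  have hMc := hcoord M
  rw [mco] at hMc
  have hcase : (i = M-1 ∧ j ≠ M-1) ∨ (j = M-1 ∧ i ≠ M-1) := by
    split_ifs at hMc <;> omega
  rcases hcase with ⟨h1, h2⟩ | ⟨h1, h2⟩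
  · subst h1
    rcases solve_main_i M k hk2 hkM d hd j hi hj h2 hcoord with ⟨ha, hb⟩ | ⟨ha, hb⟩
    · exact Or.inl ⟨rfl, ha, hb⟩
    · exact Or.inr (Or.inr (Or.inl ⟨rfl, ha, hb⟩))
  · subst h1
    have hcoord' : ∀ a, d a + (if (M-1)+1 = a then 1 else 0) + (if i+1 = a then 1 else 0)
        = mco M k a + (if M-1 = a then 1 else 0) + (if i = a then 1 else 0) := by
      intro a
      have := hcoord a
      omega
    rcases solve_main_i M k hk2 hkM d hd i hj hi h2 hcoord' with ⟨ha, hb⟩ | ⟨ha, hb⟩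
    · exact Or.inr (Or.inl ⟨rfl, ha, hb⟩)
    · exact Or.inr (Or.inr (Or.inr ⟨rfl, ha, hb⟩))

end MainSolve

lemma tripleE (x y z : ℕ →₀ ℕ) : x + y + z - x - y = z := by
  rw [add_assoc, add_tsub_cancel_left, add_tsub_cancel_left]

lemma tripleE2 (x y z : ℕ →₀ ℕ) : x + y + z - x - z = y := by
  rw [add_assoc, add_tsub_cancel_left, add_tsub_cancel_right]

lemma tripleE3 (x y z : ℕ →₀ ℕ) : x + y + z - z - x = y := by
  rw [add_tsub_cancel_right, add_tsub_cancel_left]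

lemma Lext_main (M k : ℕ) (hk2 : 2 ≤ k) (hkM : 2*k+1 ≤ M) (P : MvPolynomial ℕ ℝ)
    (hP : PartsIn P 2 (M-1)) :
    coeff (e[M] + e[M+1-k] + e[k+1]) (Lop P)
      = ((1 : ℝ) + if 2*k+1 = M then 1 else 0) * coeff (e[M-1] + e[M-k] + e[k+1]) P
        + ((1 : ℝ) + if k = 2 then 1 else 0) * coeff (e[M-1] + e[M+1-k] + e[k]) P := by
  set m : ℕ →₀ ℕ := e[M] + e[M+1-k] + e[k+1] with hm
  set β₁ : ℕ →₀ ℕ := e[M-1] + e[M-k] + e[k+1] with hβ₁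
  set β₂ : ℕ →₀ ℕ := e[M-1] + e[M+1-k] + e[k] with hβ₂
  have hd_bounds : ∀ d ∈ P.support, ∀ x, d x ≠ 0 → x < M := fun d hd x hx => by
    have := hP d hd x hx; omega
  rw [coeff_Lop_pairs P m M hd_bounds]
  set F : ℕ × ℕ → ℝ := fun p => ∑ d ∈ P.support, coeff d P *
        (((d p.1 : ℝ) * ((d p.2 : ℝ) - if p.1 = p.2 then 1 else 0)) *
          (if d - e[p.1] - e[p.2] + e[p.1+1] + e[p.2+1] = m then 1 else 0)) with hF
  have key : ∀ d ∈ P.support, ∀ i j : ℕ,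
      (((d i : ℝ) * ((d j : ℝ) - if i = j then 1 else 0)) *
        (if d - e[i] - e[j] + e[i+1] + e[j+1] = m then 1 else 0)) ≠ 0 →
      ((i = M-1 ∧ j = M-k ∧ d = β₁) ∨ (j = M-1 ∧ i = M-k ∧ d = β₁)
       ∨ (i = M-1 ∧ j = k ∧ d = β₂) ∨ (j = M-1 ∧ i = k ∧ d = β₂)) := by
    intro d hd i j hne
    have hind : d - e[i] - e[j] + e[i+1] + e[j+1] = m := by
      by_contra h
      rw [if_neg h, mul_zero] at hne
      exact hne rfl
    have hw : (d i : ℝ) * ((d j : ℝ) - if i = j then 1 else 0) ≠ 0 :=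
      fun h => hne (by rw [h, zero_mul])
    have hi0 : d i ≠ 0 := by
      intro h
      exact hw (by simp [h])
    have hij2 : (if i = j then 2 else 1) ≤ d j := by
      have h2 := (mul_ne_zero_iff.mp hw).2
      split_ifs with hij
      · subst hij
        have : (d i : ℝ) ≠ 1 := by
          intro h; rw [if_pos rfl, h, sub_self] at h2; exact h2 rfl
        have : d i ≠ 1 := fun h => this (by rw [h]; norm_num)
        omega
      · rw [if_neg hij, sub_zero] at h2
        have : d i ≠ 0 ∧ d j ≠ 0 := ⟨hi0, fun h => h2 (by simp [h])⟩
        omega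
    have hj0 : d j ≠ 0 := by split_ifs at hij2 <;> omega
    refine solve_main M k hk2 hkM d (fun x hx => hP d hd x hx) i j hi0 hj0 ?_
    intro a
    have := untrunc_coord d i j m (by omega) hij2 hind a
    have hma : m a = mco M k a := by
      rw [hm, mco]
      simp [Finsupp.add_apply, Finsupp.single_apply]
    omega
  have hne1 : M - 1 ≠ M - k := by omega
  have hne2 : M - k ≠ M - 1 := by omega
  have hne3 : M - 1 ≠ k := by omega
  have hne4 : k ≠ M - 1 := by omega
  have hsub : ({(M-1, M-k), (M-k, M-1), (M-1, k), (k, M-1)} : Finset (ℕ × ℕ))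
      ⊆ Finset.range M ×ˢ Finset.range M := by
    intro p hp
    simp only [Finset.mem_insert, Finset.mem_singleton] at hp
    rcases hp with rfl|rfl|rfl|rfl <;>
      simp only [Finset.mem_product, Finset.mem_range] <;> omega
  have hvan : ∀ p ∈ Finset.range M ×ˢ Finset.range M,
      p ∉ ({(M-1, M-k), (M-k, M-1), (M-1, k), (k, M-1)} : Finset (ℕ × ℕ)) → F p = 0 := by
    intro p _ hps
    refine Finset.sum_eq_zero fun d hd => ?_
    by_contra hne0
    have hX : (((d p.1 : ℝ) * ((d p.2 : ℝ) - if p.1 = p.2 then 1 else 0)) *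
        (if d - e[p.1] - e[p.2] + e[p.1+1] + e[p.2+1] = m then 1 else 0)) ≠ 0 :=
      fun h => hne0 (by rw [h, mul_zero])
    apply hps
    simp only [Finset.mem_insert, Finset.mem_singleton, Prod.ext_iff]
    rcases key d hd p.1 p.2 hX with ⟨h1,h2,_⟩|⟨h1,h2,_⟩|⟨h1,h2,_⟩|⟨h1,h2,_⟩ <;> tauto
  rw [← Finset.sum_subset hsub hvan]
  have hins1 : ((M-1, M-k) : ℕ × ℕ) ∉ ({(M-k, M-1), (M-1, k), (k, M-1)} : Finset (ℕ × ℕ)) := by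
    simp only [Finset.mem_insert, Finset.mem_singleton, Prod.ext_iff]
    omega
  have hins2 : ((M-k, M-1) : ℕ × ℕ) ∉ ({(M-1, k), (k, M-1)} : Finset (ℕ × ℕ)) := by
    simp only [Finset.mem_insert, Finset.mem_singleton, Prod.ext_iff]
    omega
  have hins3 : ((M-1, k) : ℕ × ℕ) ∉ ({(k, M-1)} : Finset (ℕ × ℕ)) := by
    simp only [Finset.mem_singleton, Prod.ext_iff]
    omega
  rw [Finset.sum_insert hins1, Finset.sum_insert hins2, Finset.sum_insert hins3,
    Finset.sum_singleton]
  have hswap : M - k + 1 = M + 1 - k := by omega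
  have hsub1 : (M-1)+1 = M := by omega
  have hE1 : β₁ - e[M-1] - e[M-k] + e[(M-1)+1] + e[(M-k)+1] = m := by
    rw [hβ₁, hm, tripleE, hswap, hsub1]
    abel
  have hE1' : β₁ - e[M-k] - e[M-1] + e[(M-k)+1] + e[(M-1)+1] = m := by
    rw [hβ₁, hm, add_comm e[M-1] e[M-k], tripleE, hswap, hsub1]
    abel
  have hE2 : β₂ - e[M-1] - e[k] + e[(M-1)+1] + e[k+1] = m := by
    rw [hβ₂, hm, tripleE2, hsub1]
    abel
  have hE2' : β₂ - e[k] - e[M-1] + e[k+1] + e[(M-1)+1] = m := by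
    rw [hβ₂, hm, tripleE3, hsub1]
    abel
  have hv1 : β₁ (M-1) = 1 := by
    rw [hβ₁]
    simp only [Finsupp.add_apply, Finsupp.single_apply]
    split_ifs <;> omega
  have hv2 : β₁ (M-k) = if 2*k+1 = M then 2 else 1 := by
    rw [hβ₁]
    simp only [Finsupp.add_apply, Finsupp.single_apply]
    split_ifs <;> omega
  have hv3 : β₂ (M-1) = if k = 2 then 2 else 1 := by
    rw [hβ₂]
    simp only [Finsupp.add_apply, Finsupp.single_apply]
    split_ifs <;> omega
  have hv4 : β₂ k = 1 := by
    rw [hβ₂]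
    simp only [Finsupp.add_apply, Finsupp.single_apply]
    split_ifs <;> omega
  have hF1 : F (M-1, M-k) = coeff β₁ P * ((1:ℝ) + if 2*k+1 = M then 1 else 0) := by
    simp only [hF]
    rw [Finset.sum_eq_single β₁]
    · rw [if_pos hE1, if_neg hne1, hv1, hv2, mul_one]
      push_cast
      split_ifs <;> ring
    · intro b hb hbne
      by_contra hne0
      have hX : (((b (M-1) : ℝ) * ((b (M-k) : ℝ) - if M-1 = M-k then 1 else 0)) *
          (if b - e[M-1] - e[M-k] + e[(M-1)+1] + e[(M-k)+1] = m then 1 else 0)) ≠ 0 :=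
        fun h => hne0 (by rw [h, mul_zero])
      rcases key b hb (M-1) (M-k) hX with ⟨_,_,h3⟩|⟨h1,_,_⟩|⟨_,h2,_⟩|⟨h1,_,_⟩
      · exact hbne h3
      · omega
      · omega
      · omega
    · intro h
      rw [notMem_support_iff.mp h, zero_mul]
  have hF2 : F (M-k, M-1) = coeff β₁ P * ((1:ℝ) + if 2*k+1 = M then 1 else 0) := by
    simp only [hF]
    rw [Finset.sum_eq_single β₁]
    · rw [if_pos hE1', if_neg hne2, hv1, hv2, sub_zero]
      push_cast
      split_ifs <;> ring
    · intro b hb hbne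
      by_contra hne0
      have hX : (((b (M-k) : ℝ) * ((b (M-1) : ℝ) - if M-k = M-1 then 1 else 0)) *
          (if b - e[M-k] - e[M-1] + e[(M-k)+1] + e[(M-1)+1] = m then 1 else 0)) ≠ 0 :=
        fun h => hne0 (by rw [h, mul_zero])
      rcases key b hb (M-k) (M-1) hX with ⟨h1,_,_⟩|⟨_,_,h3⟩|⟨h1,_,_⟩|⟨_,h2,_⟩
      · omega
      · exact hbne h3
      · omega
      · omega
    · intro h
      rw [notMem_support_iff.mp h, zero_mul]
  have hF3 : F (M-1, k) = coeff β₂ P * ((1:ℝ) + if k = 2 then 1 else 0) := by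
    simp only [hF]
    rw [Finset.sum_eq_single β₂]
    · rw [if_pos hE2, if_neg hne3, hv3, hv4, sub_zero]
      push_cast
      split_ifs <;> ring
    · intro b hb hbne
      by_contra hne0
      have hX : (((b (M-1) : ℝ) * ((b k : ℝ) - if M-1 = k then 1 else 0)) *
          (if b - e[M-1] - e[k] + e[(M-1)+1] + e[k+1] = m then 1 else 0)) ≠ 0 :=
        fun h => hne0 (by rw [h, mul_zero])
      rcases key b hb (M-1) k hX with ⟨_,h2,_⟩|⟨h1,_,_⟩|⟨_,_,h3⟩|⟨h1,_,_⟩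
      · omega
      · omega
      · exact hbne h3
      · omega
    · intro h
      rw [notMem_support_iff.mp h, zero_mul]
  have hF4 : F (k, M-1) = coeff β₂ P * ((1:ℝ) + if k = 2 then 1 else 0) := by
    simp only [hF]
    rw [Finset.sum_eq_single β₂]
    · rw [if_pos hE2', if_neg hne4, hv3, hv4, sub_zero]
      push_cast
      split_ifs <;> ring
    · intro b hb hbne
      by_contra hne0
      have hX : (((b k : ℝ) * ((b (M-1) : ℝ) - if k = M-1 then 1 else 0)) *
          (if b - e[k] - e[M-1] + e[k+1] + e[(M-1)+1] = m then 1 else 0)) ≠ 0 :=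
        fun h => hne0 (by rw [h, mul_zero])
      rcases key b hb k (M-1) hX with ⟨h1,_,_⟩|⟨_,h2,_⟩|⟨h1,_,_⟩|⟨_,_,h3⟩
      · omega
      · omega
      · omega
      · exact hbne h3
    · intro h
      rw [notMem_support_iff.mp h, zero_mul]
  rw [hF1, hF2, hF3, hF4]
  ring

lemma solve_g1 (M : ℕ) (hM : 3 ≤ M) (d : ℕ →₀ ℕ)
    (hd : ∀ x, d x ≠ 0 → 2 ≤ x ∧ x ≤ M-1) (i j : ℕ) (hi : d i ≠ 0) (hj : d j ≠ 0)
    (hcoord : ∀ a, d a + (if i+1 = a then 1 else 0) + (if j+1 = a then 1 else 0)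
      = ((if M = a then 2 else 0) + (if 2 = a then 1 else 0))
        + (if i = a then 1 else 0) + (if j = a then 1 else 0)) :
    i = M-1 ∧ j = M-1 ∧ d = Finsupp.single (M-1) 2 + e[2] := by
  have hib := hd i hi
  have hjb := hd j hj
  have hM0 : d M = 0 := by
    by_contra h
    have := hd M h
    omega
  have hMc := hcoord M
  have hij : i = M-1 ∧ j = M-1 := by split_ifs at hMc <;> omega
  obtain ⟨h1, h2⟩ := hij
  subst h1; subst h2
  refine ⟨rfl, rfl, ?_⟩
  ext a
  have h3 := hcoord a
  simp only [Finsupp.add_apply, Finsupp.single_apply]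
  split_ifs at h3 ⊢ <;> omega

lemma Lext_g1 (M : ℕ) (hM : 3 ≤ M) (P : MvPolynomial ℕ ℝ) (hP : PartsIn P 2 (M-1)) :
    coeff (Finsupp.single M 2 + e[2]) (Lop P)
      = (if M = 3 then (3:ℝ) else 1) * coeff (Finsupp.single (M-1) 2 + e[2]) P := by
  set m : ℕ →₀ ℕ := Finsupp.single M 2 + e[2] with hm
  set γ : ℕ →₀ ℕ := Finsupp.single (M-1) 2 + e[2] with hγ
  have hd_bounds : ∀ d ∈ P.support, ∀ x, d x ≠ 0 → x < M := fun d hd x hx => by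
    have := hP d hd x hx; omega
  rw [coeff_Lop_pairs P m M hd_bounds]
  set F : ℕ × ℕ → ℝ := fun p => ∑ d ∈ P.support, coeff d P *
        (((d p.1 : ℝ) * ((d p.2 : ℝ) - if p.1 = p.2 then 1 else 0)) *
          (if d - e[p.1] - e[p.2] + e[p.1+1] + e[p.2+1] = m then 1 else 0)) with hF
  have key : ∀ d ∈ P.support, ∀ i j : ℕ,
      (((d i : ℝ) * ((d j : ℝ) - if i = j then 1 else 0)) *
        (if d - e[i] - e[j] + e[i+1] + e[j+1] = m then 1 else 0)) ≠ 0 →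
      i = M-1 ∧ j = M-1 ∧ d = γ := by
    intro d hd i j hne
    have hind : d - e[i] - e[j] + e[i+1] + e[j+1] = m := by
      by_contra h
      rw [if_neg h, mul_zero] at hne
      exact hne rfl
    have hw : (d i : ℝ) * ((d j : ℝ) - if i = j then 1 else 0) ≠ 0 :=
      fun h => hne (by rw [h, zero_mul])
    have hi0 : d i ≠ 0 := by
      intro h
      exact hw (by simp [h])
    have hij2 : (if i = j then 2 else 1) ≤ d j := by
      have h2 := (mul_ne_zero_iff.mp hw).2
      split_ifs with hij
      · subst hij
        have h3 : (d i : ℝ) ≠ 1 := by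
          intro h; rw [if_pos rfl, h, sub_self] at h2; exact h2 rfl
        have : d i ≠ 1 := fun h => h3 (by rw [h]; norm_num)
        omega
      · rw [if_neg hij, sub_zero] at h2
        have : d j ≠ 0 := fun h => h2 (by simp [h])
        omega
    have hj0 : d j ≠ 0 := by split_ifs at hij2 <;> omega
    refine solve_g1 M hM d (fun x hx => hP d hd x hx) i j hi0 hj0 ?_
    intro a
    have := untrunc_coord d i j m (by omega) hij2 hind a
    have hma : m a = (if M = a then 2 else 0) + (if 2 = a then 1 else 0) := by
      rw [hm]
      simp only [Finsupp.add_apply, Finsupp.single_apply]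
    omega
  have hsub : ({(M-1, M-1)} : Finset (ℕ × ℕ)) ⊆ Finset.range M ×ˢ Finset.range M := by
    intro p hp
    rw [Finset.mem_singleton] at hp
    subst hp
    simp only [Finset.mem_product, Finset.mem_range]
    omega
  have hvan : ∀ p ∈ Finset.range M ×ˢ Finset.range M,
      p ∉ ({(M-1, M-1)} : Finset (ℕ × ℕ)) → F p = 0 := by
    intro p _ hps
    refine Finset.sum_eq_zero fun d hd => ?_
    by_contra hne0
    have hX : (((d p.1 : ℝ) * ((d p.2 : ℝ) - if p.1 = p.2 then 1 else 0)) *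
        (if d - e[p.1] - e[p.2] + e[p.1+1] + e[p.2+1] = m then 1 else 0)) ≠ 0 :=
      fun h => hne0 (by rw [h, mul_zero])
    obtain ⟨h1, h2, _⟩ := key d hd p.1 p.2 hX
    exact hps (by rw [Finset.mem_singleton, Prod.ext_iff]; exact ⟨h1, h2⟩)
  rw [← Finset.sum_subset hsub hvan, Finset.sum_singleton]
  have hvγ : γ (M-1) = if M = 3 then 3 else 2 := by
    rw [hγ]
    simp only [Finsupp.add_apply, Finsupp.single_apply]
    split_ifs <;> omega
  have hE : γ - e[M-1] - e[M-1] + e[(M-1)+1] + e[(M-1)+1] = m := by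
    rw [hγ, hm]
    ext a
    simp only [Finsupp.add_apply, Finsupp.tsub_apply, Finsupp.single_apply]
    split_ifs <;> omega
  have hFv : F (M-1, M-1) = coeff γ P * ((if M = 3 then (3:ℝ) else 2) *
      ((if M = 3 then (3:ℝ) else 2) - 1)) := by
    simp only [hF]
    rw [Finset.sum_eq_single γ]
    · rw [if_pos hE, if_true, hvγ]
      push_cast
      split_ifs <;> ring
    · intro b hb hbne
      by_contra hne0
      have hX : (((b (M-1) : ℝ) * ((b (M-1) : ℝ) - if M-1 = M-1 then 1 else 0)) *
          (if b - e[M-1] - e[M-1] + e[(M-1)+1] + e[(M-1)+1] = m then 1 else 0)) ≠ 0 := by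
        rw [if_pos rfl]
        intro h
        apply hne0
        rw [if_true, h, mul_zero]
      exact hbne (key b hb (M-1) (M-1) hX).2.2
    · intro h
      rw [notMem_support_iff.mp h, zero_mul]
  rw [hFv]
  split_ifs <;> ring

lemma solve_mid_i (m : ℕ) (hm2 : 2 ≤ m) (d : ℕ →₀ ℕ)
    (hd : ∀ x, d x ≠ 0 → 2 ≤ x ∧ x ≤ 2*m-1) (j : ℕ) (hi : d (2*m-1) ≠ 0) (hj : d j ≠ 0)
    (hjne : j ≠ 2*m-1)
    (hcoord : ∀ a, d a + (if (2*m-1)+1 = a then 1 else 0) + (if j+1 = a then 1 else 0)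
      = ((if 2*m = a then 1 else 0) + (if m+1 = a then 2 else 0))
        + (if 2*m-1 = a then 1 else 0) + (if j = a then 1 else 0)) :
    j = m ∧ d = e[2*m-1] + e[m+1] + e[m] := by
  have hjb := hd j hj
  have hib := hd (2*m-1) hi
  have hdj1 := hcoord (j+1)
  have hj2 : j = m := by
    have hdj2 : j+1 = m+1 ∨ j+1 = 2*m-1 := by
      split_ifs at hdj1 <;> omega
    rcases hdj2 with h|h
    · omega
    · have h2 := hcoord (2*m-1)
      split_ifs at h2 <;> omega
  subst hj2
  refine ⟨rfl, ?_⟩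
  ext a
  have h3 := hcoord a
  simp only [Finsupp.add_apply, Finsupp.single_apply]
  split_ifs at h3 ⊢ <;> omega

lemma solve_mid (m : ℕ) (hm2 : 2 ≤ m) (d : ℕ →₀ ℕ)
    (hd : ∀ x, d x ≠ 0 → 2 ≤ x ∧ x ≤ 2*m-1) (i j : ℕ) (hi : d i ≠ 0) (hj : d j ≠ 0)
    (hcoord : ∀ a, d a + (if i+1 = a then 1 else 0) + (if j+1 = a then 1 else 0)
      = ((if 2*m = a then 1 else 0) + (if m+1 = a then 2 else 0))
        + (if i = a then 1 else 0) + (if j = a then 1 else 0)) :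
    (i = 2*m-1 ∧ j = m ∧ d = e[2*m-1] + e[m+1] + e[m])
    ∨ (j = 2*m-1 ∧ i = m ∧ d = e[2*m-1] + e[m+1] + e[m]) := by
  have hib := hd i hi
  have hjb := hd j hj
  have hM : d (2*m) = 0 := by
    by_contra h
    have := hd (2*m) h
    omega
  have hMc := hcoord (2*m)
  have hcase : (i = 2*m-1 ∧ j ≠ 2*m-1) ∨ (j = 2*m-1 ∧ i ≠ 2*m-1) := by
    split_ifs at hMc <;> omega
  rcases hcase with ⟨h1, h2⟩ | ⟨h1, h2⟩
  · subst h1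
    obtain ⟨ha, hb⟩ := solve_mid_i m hm2 d hd j hi hj h2 hcoord
    exact Or.inl ⟨rfl, ha, hb⟩
  · subst h1
    have hcoord' : ∀ a, d a + (if (2*m-1)+1 = a then 1 else 0) + (if i+1 = a then 1 else 0)
        = ((if 2*m = a then 1 else 0) + (if m+1 = a then 2 else 0))
          + (if 2*m-1 = a then 1 else 0) + (if i = a then 1 else 0) := by
      intro a
      have := hcoord a
      omega
    obtain ⟨ha, hb⟩ := solve_mid_i m hm2 d hd i hj hi h2 hcoord'
    exact Or.inr ⟨rfl, ha, hb⟩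

lemma Lext_mid (m : ℕ) (hm2 : 2 ≤ m) (P : MvPolynomial ℕ ℝ) (hP : PartsIn P 2 (2*m-1)) :
    coeff (e[2*m] + Finsupp.single (m+1) 2) (Lop P)
      = (if m = 2 then (2:ℝ) else 1) * coeff (e[2*m-1] + e[m+1] + e[m]) P := by
  set mm : ℕ →₀ ℕ := e[2*m] + Finsupp.single (m+1) 2 with hmm
  set βa : ℕ →₀ ℕ := e[2*m-1] + e[m+1] + e[m] with hβa
  have hd_bounds : ∀ d ∈ P.support, ∀ x, d x ≠ 0 → x < 2*m := fun d hd x hx => by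
    have := hP d hd x hx; omega
  rw [coeff_Lop_pairs P mm (2*m) hd_bounds]
  set F : ℕ × ℕ → ℝ := fun p => ∑ d ∈ P.support, coeff d P *
        (((d p.1 : ℝ) * ((d p.2 : ℝ) - if p.1 = p.2 then 1 else 0)) *
          (if d - e[p.1] - e[p.2] + e[p.1+1] + e[p.2+1] = mm then 1 else 0)) with hF
  have key : ∀ d ∈ P.support, ∀ i j : ℕ,
      (((d i : ℝ) * ((d j : ℝ) - if i = j then 1 else 0)) *
        (if d - e[i] - e[j] + e[i+1] + e[j+1] = mm then 1 else 0)) ≠ 0 →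
      (i = 2*m-1 ∧ j = m ∧ d = βa) ∨ (j = 2*m-1 ∧ i = m ∧ d = βa) := by
    intro d hd i j hne
    have hind : d - e[i] - e[j] + e[i+1] + e[j+1] = mm := by
      by_contra h
      rw [if_neg h, mul_zero] at hne
      exact hne rfl
    have hw : (d i : ℝ) * ((d j : ℝ) - if i = j then 1 else 0) ≠ 0 :=
      fun h => hne (by rw [h, zero_mul])
    have hi0 : d i ≠ 0 := by
      intro h
      exact hw (by simp [h])
    have hij2 : (if i = j then 2 else 1) ≤ d j := by
      have h2 := (mul_ne_zero_iff.mp hw).2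
      split_ifs with hij
      · subst hij
        have h3 : (d i : ℝ) ≠ 1 := by
          intro h; rw [if_pos rfl, h, sub_self] at h2; exact h2 rfl
        have : d i ≠ 1 := fun h => h3 (by rw [h]; norm_num)
        omega
      · rw [if_neg hij, sub_zero] at h2
        have : d j ≠ 0 := fun h => h2 (by simp [h])
        omega
    have hj0 : d j ≠ 0 := by split_ifs at hij2 <;> omega
    refine solve_mid m hm2 d (fun x hx => hP d hd x hx) i j hi0 hj0 ?_
    intro a
    have := untrunc_coord d i j mm (by omega) hij2 hind a
    have hma : mm a = (if 2*m = a then 1 else 0) + (if m+1 = a then 2 else 0) := by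
      rw [hmm]
      simp only [Finsupp.add_apply, Finsupp.single_apply]
    omega
  have hne1 : 2*m-1 ≠ m := by omega
  have hne2 : m ≠ 2*m-1 := by omega
  have hsub : ({(2*m-1, m), (m, 2*m-1)} : Finset (ℕ × ℕ))
      ⊆ Finset.range (2*m) ×ˢ Finset.range (2*m) := by
    intro p hp
    simp only [Finset.mem_insert, Finset.mem_singleton] at hp
    rcases hp with rfl|rfl <;> simp only [Finset.mem_product, Finset.mem_range] <;> omega
  have hvan : ∀ p ∈ Finset.range (2*m) ×ˢ Finset.range (2*m),
      p ∉ ({(2*m-1, m), (m, 2*m-1)} : Finset (ℕ × ℕ)) → F p = 0 := by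
    intro p _ hps
    refine Finset.sum_eq_zero fun d hd => ?_
    by_contra hne0
    have hX : (((d p.1 : ℝ) * ((d p.2 : ℝ) - if p.1 = p.2 then 1 else 0)) *
        (if d - e[p.1] - e[p.2] + e[p.1+1] + e[p.2+1] = mm then 1 else 0)) ≠ 0 :=
      fun h => hne0 (by rw [h, mul_zero])
    apply hps
    simp only [Finset.mem_insert, Finset.mem_singleton, Prod.ext_iff]
    rcases key d hd p.1 p.2 hX with ⟨h1,h2,_⟩|⟨h1,h2,_⟩ <;> tauto
  rw [← Finset.sum_subset hsub hvan]
  have hins1 : ((2*m-1, m) : ℕ × ℕ) ∉ ({(m, 2*m-1)} : Finset (ℕ × ℕ)) := by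
    simp only [Finset.mem_singleton, Prod.ext_iff]
    omega
  rw [Finset.sum_insert hins1, Finset.sum_singleton]
  have hv1 : βa (2*m-1) = if m = 2 then 2 else 1 := by
    rw [hβa]
    simp only [Finsupp.add_apply, Finsupp.single_apply]
    split_ifs <;> omega
  have hv2 : βa m = 1 := by
    rw [hβa]
    simp only [Finsupp.add_apply, Finsupp.single_apply]
    split_ifs <;> omega
  have hE : βa - e[2*m-1] - e[m] + e[(2*m-1)+1] + e[m+1] = mm := by
    rw [hβa, hmm]
    ext a
    simp only [Finsupp.add_apply, Finsupp.tsub_apply, Finsupp.single_apply]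
    split_ifs <;> omega
  have hE' : βa - e[m] - e[2*m-1] + e[m+1] + e[(2*m-1)+1] = mm := by
    rw [hβa, hmm]
    ext a
    simp only [Finsupp.add_apply, Finsupp.tsub_apply, Finsupp.single_apply]
    split_ifs <;> omega
  have hF1 : F (2*m-1, m) = coeff βa P * (if m = 2 then (2:ℝ) else 1) := by
    simp only [hF]
    rw [Finset.sum_eq_single βa]
    · rw [if_pos hE, if_neg hne1, hv1, hv2, sub_zero]
      push_cast
      split_ifs <;> ring
    · intro b hb hbne
      by_contra hne0
      have hX : (((b (2*m-1) : ℝ) * ((b m : ℝ) - if 2*m-1 = m then 1 else 0)) *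
          (if b - e[2*m-1] - e[m] + e[(2*m-1)+1] + e[m+1] = mm then 1 else 0)) ≠ 0 :=
        fun h => hne0 (by rw [h, mul_zero])
      rcases key b hb (2*m-1) m hX with ⟨_,_,h3⟩|⟨h1,_,_⟩
      · exact hbne h3
      · omega
    · intro h
      rw [notMem_support_iff.mp h, zero_mul]
  have hF2 : F (m, 2*m-1) = coeff βa P * (if m = 2 then (2:ℝ) else 1) := by
    simp only [hF]
    rw [Finset.sum_eq_single βa]
    · rw [if_pos hE', if_neg hne2, hv1, hv2, sub_zero]
      push_cast
      split_ifs <;> ring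
    · intro b hb hbne
      by_contra hne0
      have hX : (((b m : ℝ) * ((b (2*m-1) : ℝ) - if m = 2*m-1 then 1 else 0)) *
          (if b - e[m] - e[2*m-1] + e[m+1] + e[(2*m-1)+1] = mm then 1 else 0)) ≠ 0 :=
        fun h => hne0 (by rw [h, mul_zero])
      rcases key b hb m (2*m-1) hX with ⟨h1,_,_⟩|⟨_,_,h3⟩
      · omega
      · exact hbne h3
    · intro h
      rw [notMem_support_iff.mp h, zero_mul]
  rw [hF1, hF2]
  split_ifs <;> ring

lemma coeff_Apoly (M : ℕ) (m : ℕ →₀ ℕ) :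
    coeff m (Apoly M) = -∑ j ∈ Finset.Ico 1 M, (M.choose j : ℝ) *
      (if e[1+j] + e[1+M-j] + e[M] = m then 1 else 0) := by
  rw [Apoly, coeff_neg, coeff_sum]
  congr 1
  refine Finset.sum_congr rfl fun j _ => ?_
  rw [coeff_smul, XXX_eq, coeff_monomial, smul_eq_mul]

lemma coeff_Apoly_main (M k : ℕ) (hk2 : 2 ≤ k) (hkM : 2*k+1 ≤ M) :
    coeff (e[M] + e[M+1-k] + e[k+1]) (Apoly M) = -(2 * (M.choose k : ℝ)) := by
  rw [coeff_Apoly]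
  have hsub : ({k, M-k} : Finset ℕ) ⊆ Finset.Ico 1 M := by
    intro j hj
    simp only [Finset.mem_insert, Finset.mem_singleton] at hj
    rcases hj with rfl|rfl <;> rw [Finset.mem_Ico] <;> omega
  have hvan : ∀ j ∈ Finset.Ico 1 M, j ∉ ({k, M-k} : Finset ℕ) →
      (M.choose j : ℝ) * (if e[1+j] + e[1+M-j] + e[M] = e[M] + e[M+1-k] + e[k+1]
        then 1 else 0) = 0 := by
    intro j hj hjn
    simp only [Finset.mem_insert, Finset.mem_singleton] at hjn
    rw [Finset.mem_Ico] at hj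
    rw [if_neg, mul_zero]
    intro hEq
    have h1 := DFunLike.congr_fun hEq (1+j)
    simp only [Finsupp.add_apply, Finsupp.single_apply] at h1
    split_ifs at h1 <;> omega
  rw [← Finset.sum_subset hsub hvan, Finset.sum_insert (by
    rw [Finset.mem_singleton]; omega), Finset.sum_singleton]
  have hE1 : e[1+k] + e[1+M-k] + e[M] = e[M] + e[M+1-k] + e[k+1] := by
    ext a
    simp only [Finsupp.add_apply, Finsupp.single_apply]
    split_ifs <;> omega
  have hE2 : e[1+(M-k)] + e[1+M-(M-k)] + e[M] = e[M] + e[M+1-k] + e[k+1] := by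
    ext a
    simp only [Finsupp.add_apply, Finsupp.single_apply]
    split_ifs <;> omega
  rw [if_pos hE1, if_pos hE2, Nat.choose_symm (by omega : k ≤ M)]
  ring

lemma coeff_Apoly_g1 (M : ℕ) (hM : 3 ≤ M) :
    coeff (Finsupp.single M 2 + e[2]) (Apoly M) = -(2 * (M : ℝ)) := by
  rw [coeff_Apoly]
  have hsub : ({1, M-1} : Finset ℕ) ⊆ Finset.Ico 1 M := by
    intro j hj
    simp only [Finset.mem_insert, Finset.mem_singleton] at hj
    rcases hj with rfl|rfl <;> rw [Finset.mem_Ico] <;> omega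
  have hvan : ∀ j ∈ Finset.Ico 1 M, j ∉ ({1, M-1} : Finset ℕ) →
      (M.choose j : ℝ) * (if e[1+j] + e[1+M-j] + e[M] = Finsupp.single M 2 + e[2]
        then 1 else 0) = 0 := by
    intro j hj hjn
    simp only [Finset.mem_insert, Finset.mem_singleton] at hjn
    rw [Finset.mem_Ico] at hj
    rw [if_neg, mul_zero]
    intro hEq
    have h1 := DFunLike.congr_fun hEq (1+j)
    simp only [Finsupp.add_apply, Finsupp.single_apply] at h1
    split_ifs at h1 <;> omega
  rw [← Finset.sum_subset hsub hvan, Finset.sum_insert (by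
    rw [Finset.mem_singleton]; omega), Finset.sum_singleton]
  have hE1 : e[1+1] + e[1+M-1] + e[M] = Finsupp.single M 2 + e[2] := by
    ext a
    simp only [Finsupp.add_apply, Finsupp.single_apply]
    split_ifs <;> omega
  have hE2 : e[1+(M-1)] + e[1+M-(M-1)] + e[M] = Finsupp.single M 2 + e[2] := by
    ext a
    simp only [Finsupp.add_apply, Finsupp.single_apply]
    split_ifs <;> omega
  rw [if_pos hE1, if_pos hE2, Nat.choose_one_right,
    Nat.choose_symm (by omega : 1 ≤ M), Nat.choose_one_right]
  ring

lemma coeff_Apoly_mid (m : ℕ) (hm : 2 ≤ m) :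
    coeff (e[2*m] + Finsupp.single (m+1) 2) (Apoly (2*m))
      = -(((2*m).choose m : ℝ)) := by
  rw [coeff_Apoly]
  have hsub : ({m} : Finset ℕ) ⊆ Finset.Ico 1 (2*m) := by
    intro j hj
    rw [Finset.mem_singleton] at hj
    subst hj
    rw [Finset.mem_Ico]
    omega
  have hvan : ∀ j ∈ Finset.Ico 1 (2*m), j ∉ ({m} : Finset ℕ) →
      ((2*m).choose j : ℝ) * (if e[1+j] + e[1+2*m-j] + e[2*m]
        = e[2*m] + Finsupp.single (m+1) 2 then 1 else 0) = 0 := by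
    intro j hj hjn
    rw [Finset.mem_singleton] at hjn
    rw [Finset.mem_Ico] at hj
    rw [if_neg, mul_zero]
    intro hEq
    have h1 := DFunLike.congr_fun hEq (1+j)
    simp only [Finsupp.add_apply, Finsupp.single_apply] at h1
    split_ifs at h1 <;> omega
  rw [← Finset.sum_subset hsub hvan, Finset.sum_singleton]
  have hE1 : e[1+m] + e[1+2*m-m] + e[2*m] = e[2*m] + Finsupp.single (m+1) 2 := by
    ext a
    simp only [Finsupp.add_apply, Finsupp.single_apply]
    split_ifs <;> omega
  rw [if_pos hE1]
  ring

lemma Lop_zero : Lop 0 = 0 := by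
  rw [Lop, show D1op = extendMon D1mon from rfl, show D2op = extendMon D2mon from rfl,
    extendMon_zero, extendMon_zero, extendMon_zero, sub_zero, smul_zero]

lemma Hop_zero : Hop 0 = 0 := extendMon_zero Hmon

lemma Rpoly3 : Rpoly 3 = monomial (Finsupp.single 2 3) (-2 : ℝ) := by
  have hs := Rpoly_succ 2 le_rfl
  norm_num at hs
  rw [hs, show Rpoly 2 = 0 from rfl, Lop_zero, Hop_zero, add_zero, add_zero, Apoly]
  rw [show Finset.Ico 1 2 = {1} from rfl, Finset.sum_singleton]
  rw [XXX_eq, show (Nat.choose 2 1 : ℝ) = 2 by norm_num]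
  rw [show e[1+1] + e[1+2-1] + e[2] = Finsupp.single 2 3 from by
    ext a
    simp only [Finsupp.add_apply, Finsupp.single_apply]
    split_ifs <;> omega]
  rw [smul_monomial]
  rw [show ((2:ℝ) • (1:ℝ)) = 2 by norm_num]
  exact (map_neg (monomial (Finsupp.single 2 3) : ℝ →ₗ[ℝ] MvPolynomial ℕ ℝ) (2:ℝ)).symm

lemma claimB (M : ℕ) (hM : 4 ≤ M) : coeff (Finsupp.single (M-1) 2 + e[2]) (Rpoly M)
    = -((M:ℝ) * ((M:ℝ) - 1)) := by
  induction M, hM using Nat.le_induction with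
  | base =>
    have hs := Rpoly_succ 3 (by omega)
    norm_num at hs
    rw [show (4:ℕ)-1 = 3 from rfl, hs, coeff_add, coeff_add]
    have hA := coeff_Apoly_g1 3 le_rfl
    rw [show Finsupp.single (3:ℕ) 2 + e[2] = Finsupp.single (3:ℕ) 2 + e[2] from rfl] at hA
    rw [hA]
    have hL := Lext_g1 3 le_rfl (Rpoly 3) (Rpoly_partsIn 3)
    rw [if_pos rfl] at hL
    rw [hL]
    have hγ : Finsupp.single ((3:ℕ)-1) 2 + e[2] = Finsupp.single (2:ℕ) 3 := by
      ext a
      simp only [Finsupp.add_apply, Finsupp.single_apply]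
      split_ifs <;> omega
    have hc : coeff (Finsupp.single (2:ℕ) 3) (Rpoly 3) = -2 := by
      rw [Rpoly3, coeff_monomial, if_pos rfl]
    rw [hγ, hc]
    have hH : coeff (Finsupp.single (3:ℕ) 2 + e[2]) (Hop (Rpoly 3)) = 0 := by
      refine coeff_Hop_zero _ 2 3 _ (fun d hd x hx => (Rpoly_partsIn 3 d hd x hx).2) (by omega) ?_
      simp only [Finsupp.add_apply, Finsupp.single_apply]
      norm_num
    rw [hH]
    norm_num
  | succ M hM ihM =>
    rw [Rpoly_succ M (by omega), coeff_add, coeff_add]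
    rw [show (M+1-1 : ℕ) = M from rfl]
    rw [coeff_Apoly_g1 M (by omega)]
    have hL := Lext_g1 M (by omega) (Rpoly M) (Rpoly_partsIn M)
    rw [if_neg (by omega)] at hL
    rw [hL, ihM]
    have hH : coeff (Finsupp.single M 2 + e[2]) (Hop (Rpoly M)) = 0 := by
      refine coeff_Hop_zero _ (M-1) M _
        (fun d hd x hx => (Rpoly_partsIn M d hd x hx).2) (by omega) ?_
      simp only [Finsupp.add_apply, Finsupp.single_apply]
      split_ifs <;> omega
    rw [hH]
    push_cast
    ring

lemma choose_pascal (n k : ℕ) (h1 : 1 ≤ k) (h2 : k ≤ n) :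
    n.choose k = (n-1).choose (k-1) + (n-1).choose k := by
  obtain ⟨n', rfl⟩ : ∃ n', n = n'+1 := ⟨n-1, by omega⟩
  obtain ⟨k', rfl⟩ : ∃ k', k = k'+1 := ⟨k-1, by omega⟩
  simp [Nat.choose_succ_succ]

lemma choose_sym_half (k : ℕ) (hk : 1 ≤ k) : (2*k-1).choose k = (2*k-1).choose (k-1) := by
  have h := Nat.choose_symm (show k ≤ 2*k-1 by omega)
  rw [show 2*k-1-k = k-1 by omega] at h
  exact h.symm

lemma claimA : ∀ M k, 2 ≤ k → 2*k+1 < M →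
    coeff (e[M-1] + e[M-k] + e[k+1]) (Rpoly M)
      = -(2*(M:ℝ) * (((M-1).choose k) : ℝ)) := by
  intro M
  induction M using Nat.strong_induction_on with
  | _ M ih =>
    intro k hk2 hkM
    obtain ⟨N, rfl⟩ : ∃ N, M = N + 1 := ⟨M-1, by omega⟩
    have hN : 2*k+1 ≤ N := by omega
    rw [show N+1-1 = N by omega]
    rw [Rpoly_succ N (by omega), coeff_add, coeff_add]
    rw [coeff_Apoly_main N k hk2 hN]
    have hL := Lext_main N k hk2 hN (Rpoly N) (Rpoly_partsIn N)
    rw [hL]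
    have hH : coeff (e[N] + e[N+1-k] + e[k+1]) (Hop (Rpoly N)) = 0 := by
      refine coeff_Hop_zero _ (N-1) N _
        (fun d hd x hx => (Rpoly_partsIn N d hd x hx).2) (by omega) ?_
      simp only [Finsupp.add_apply, Finsupp.single_apply]
      split_ifs <;> omega
    rw [hH, add_zero]
    have hb1 : ((1:ℝ) + if 2*k+1 = N then 1 else 0)
          * coeff (e[N-1] + e[N-k] + e[k+1]) (Rpoly N)
        = -(2*(N:ℝ) * (((N-1).choose k) : ℝ)) := by
      rcases eq_or_ne (2*k+1) N with hmid | hmid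
      · subst hmid
        rw [if_pos rfl]
        rw [show 2*k+1-1 = 2*k by omega, show 2*k+1-k = k+1 by omega]
        have hvec : e[2*k] + e[k+1] + e[k+1] = e[2*k] + Finsupp.single (k+1) 2 := by
          ext a
          simp only [Finsupp.add_apply, Finsupp.single_apply]
          split_ifs <;> omega
        rw [hvec]
        rw [Rpoly_succ (2*k) (by omega), coeff_add, coeff_add]
        rw [coeff_Apoly_mid k hk2]
        rw [Lext_mid k hk2 (Rpoly (2*k)) (Rpoly_partsIn (2*k))]
        have hHm : coeff (e[2*k] + Finsupp.single (k+1) 2) (Hop (Rpoly (2*k))) = 0 := by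
          refine coeff_Hop_zero _ (2*k-1) (2*k) _
            (fun d hd x hx => (Rpoly_partsIn (2*k) d hd x hx).2) (by omega) ?_
          simp only [Finsupp.add_apply, Finsupp.single_apply]
          split_ifs <;> omega
        rw [hHm, add_zero]
        rcases eq_or_ne k 2 with hk22 | hk22
        · subst hk22
          rw [if_pos rfl]
          have hvec2 : e[2*2-1] + e[2+1] + e[2] = Finsupp.single ((4:ℕ)-1) 2 + e[2] := by
            ext a
            simp only [Finsupp.add_apply, Finsupp.single_apply]
            split_ifs <;> omega
          rw [hvec2, claimB 4 le_rfl]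
          have h6 : ((2*2).choose 2 : ℕ) = 6 := by decide
          rw [h6]
          norm_num
        · rw [if_neg hk22]
          have hval := ih (2*k) (by omega) (k-1) (by omega) (by omega)
          rw [show 2*k-(k-1) = k+1 by omega, show (k-1)+1 = k by omega] at hval
          rw [hval]
          have hcc : (2:ℕ) * ((2*k-1).choose (k-1)) = (2*k).choose k := by
            rw [choose_pascal (2*k) k (by omega) (by omega), choose_sym_half k (by omega)]
            omega
          have hccR : ((2*k).choose k : ℝ) = 2 * (((2*k-1).choose (k-1)) : ℝ) := by
            exact_mod_cast hcc.symm
          rw [hccR]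
          push_cast
          ring
      · rw [if_neg hmid]
        rw [ih N (by omega) k hk2 (by omega)]
        ring
    have hb2 : ((1:ℝ) + if k = 2 then 1 else 0)
          * coeff (e[N-1] + e[N+1-k] + e[k]) (Rpoly N)
        = -(2*(N:ℝ) * (((N-1).choose (k-1)) : ℝ)) := by
      rcases eq_or_ne k 2 with hk22 | hk22
      · subst hk22
        rw [if_pos rfl]
        have hvec : e[N-1] + e[N+1-2] + e[2] = Finsupp.single (N-1) 2 + e[2] := by
          ext a
          simp only [Finsupp.add_apply, Finsupp.single_apply]
          split_ifs <;> omega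
        rw [hvec, claimB N (by omega)]
        rw [show (2:ℕ)-1 = 1 from rfl, Nat.choose_one_right]
        rw [Nat.cast_sub (by omega : 1 ≤ N)]
        push_cast
        ring
      · rw [if_neg hk22]
        have hval := ih N (by omega) (k-1) (by omega) (by omega)
        rw [show N-(k-1) = N+1-k by omega, show (k-1)+1 = k by omega] at hval
        rw [hval]
        ring
    rw [hb1, hb2]
    have hp : (N.choose k : ℝ) = ((N-1).choose (k-1) : ℝ) + ((N-1).choose k : ℝ) := by
      exact_mod_cast choose_pascal N k (by omega) (by omega)
    rw [hp]
    push_cast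
    ring


/-- The monomial `T_α = T_{α₁} ⋯ T_{α_r}` attached to a tuple (multiset) `α`. -/
def Tmon (α : Multiset ℕ) : MvPolynomial ℕ ℝ := (α.map X).prod

/-- `c_α^{(n)}`: the coefficient of the monomial `T_α` in `R_n`. -/
def coeffR (n : ℕ) (α : Multiset ℕ) : ℝ :=
  MvPolynomial.coeff (Multiset.toFinsupp α) (Rpoly n)

/-- `l_{β,α}`: the coefficient of `T_α` in `L(T_β)`. -/
def lcoef (β α : Multiset ℕ) : ℝ :=
  MvPolynomial.coeff (Multiset.toFinsupp α) (Lop (Tmon β))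

/-- `h_{β,α}`: the coefficient of `T_α` in `H(T_β)`. -/
def hcoef (β α : Multiset ℕ) : ℝ :=
  MvPolynomial.coeff (Multiset.toFinsupp α) (Hop (Tmon β))

/-- `I_{r,n}`: partitions of `2n` of length `r` with parts between `2` and `n-1`. -/
def Ipart (r n : ℕ) : Finset (Multiset ℕ) :=
  ((Finset.univ : Finset (Nat.Partition (2 * n))).image Nat.Partition.parts).filter
    (fun m => Multiset.card m = r ∧ ∀ a ∈ m, 2 ≤ a ∧ a ≤ n - 1)

/-- `I_n`: partitions of `2n` of length between `3` and `n`, parts between `2` and `n-1`. -/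
def IpartAll (n : ℕ) : Finset (Multiset ℕ) :=
  ((Finset.univ : Finset (Nat.Partition (2 * n))).image Nat.Partition.parts).filter
    (fun m => 3 ≤ Multiset.card m ∧ Multiset.card m ≤ n ∧ ∀ a ∈ m, 2 ≤ a ∧ a ≤ n - 1)

/-- The polynomial `a_{n,k}`. -/
def ank (n k : ℕ) : MvPolynomial ℕ ℝ :=
  ∑ α ∈ (IpartAll (n + 1)).filter (fun α => (n - k) ∈ α ∧ ∀ a ∈ α, a ≤ n - k),
    C (coeffR (n + 1) α) * Tmon (α.erase (n - k))

/-- The polynomial `a_n = a_{n,0} - c_{(n,n,2)}^{(n+1)} T_2 T_n`. -/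
def aform (n : ℕ) : MvPolynomial ℕ ℝ :=
  ank n 0 - C (coeffR (n + 1) {n, n, 2}) * (X 2 * X n)

/-- The coefficient of `T_n T_{n+1-k} T_{k+1}` in `R_{n+1}` equals `-2(n+1) C(n,k)`. -/
theorem statement18 (n : ℕ) (hn : 8 ≤ n) (k : ℕ) (hk1 : 2 ≤ k) (hk2 : k ≤ n / 2 - 1) :
    coeffR (n + 1) ({n, n + 1 - k, k + 1} : Multiset ℕ)
      = -(2 * ((n : ℝ) + 1) * (n.choose k : ℝ)) := by
  have hkn : 2*k + 1 < n + 1 := by omega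
  have hA := claimA (n+1) k hk1 hkn
  rw [show n+1-1 = n by omega] at hA
  rw [coeffR]
  have hms : (Multiset.toFinsupp ({n, n + 1 - k, k + 1} : Multiset ℕ))
      = e[n] + e[n+1-k] + e[k+1] := by
    ext a
    rw [Multiset.toFinsupp_apply]
    simp only [Finsupp.add_apply, Finsupp.single_apply, Multiset.insert_eq_cons,
      Multiset.count_cons, Multiset.count_singleton]
    split_ifs <;> omega
  rw [hms, hA]
  push_cast
  ring


end
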